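/- Let n, r ≥ 0 and s ≥ 1 be integers, a < b real numbers, a < τ_1 < … < τ_n < b, and 0 ≤ j ≤ s−1. Let P_{n,r,s,b,j} be the unique polynomial of degree at most 2n+r+s−1 satisfying P^{(k)}(a) = 0 for k = 0, …, r−1, P(τ_k) = P'(τ_k) = 0 for k = 1, …, n, and P^{(k)}(b)/k! = δ_{kj}/j! for k = 0, …, s−1. Then (−1)^j P_{n,r,s,b,j}(t) ≥ 0 for all t ∈ [a, b]; that is, P_{n,r,s,b,j} has constant sign (−1)^j on [a, b]. -/

import Mathlib

/-!
Write `p = (X - b)^j * A * R`, where `A = (X - a)^r * ∏ (X - τ_k)^2` collects the prescribed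
zeros and is nonnegative on `[a, b]`. The conditions at `b` say that `G = A * R` has
`G(b) = 1/j! > 0` and that `G'` vanishes to order `s - 1 - j` at `b`. If `R` had a zero in
`[a, b)`, then `G` would have `2n + r + 1` zeros in `[a, b)` counted with multiplicity, so by
Rolle's theorem `G'` would have `2n + r` zeros there, and `s - 1 - j` more at `b`: more than
`deg G' < deg G ≤ 2n + r + s - 1 - j` allows. So `R > 0` on `[a, b]`, and
`(-1)^j p(t) = (b - t)^j A(t) R(t) ≥ 0`.
-/

open Polynomial
open scoped Nat

namespace Polynomial

theorem iteratedDeriv_eval (p : ℝ[X]) (k : ℕ) :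
    iteratedDeriv k (fun t => p.eval t) = fun t => (derivative^[k] p).eval t := by
  induction k with
  | zero => rfl
  | succ k ih =>
    ext t
    rw [iteratedDeriv_succ, ih, Function.iterate_succ_apply', Polynomial.deriv]

theorem taylor_coeff_eq_iteratedDeriv_div (p : ℝ[X]) (x : ℝ) (k : ℕ) :
    (taylor x p).coeff k = iteratedDeriv k (fun t => p.eval t) x / k ! := by
  rw [iteratedDeriv_eval, ← factorial_smul_hasseDeriv, LinearMap.smul_apply]
  simp only [nsmul_eq_mul, eval_mul, eval_natCast, taylor_coeff]
  field_simp

theorem X_sub_C_pow_dvd_iff_taylor_coeff {R : Type*} [CommRing R] {p : R[X]} {x : R} {m : ℕ} :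
    (X - C x) ^ m ∣ p ↔ ∀ k < m, (taylor x p).coeff k = 0 := by
  have h : (X - C x) ^ m ∣ p ↔ taylor x ((X - C x) ^ m) ∣ taylor x p :=
    (map_dvd_iff (taylorEquiv x)).symm
  rw [h, taylor_pow, map_sub, taylor_X, taylor_C, add_sub_cancel_right, X_pow_dvd_iff]

theorem X_sub_C_pow_dvd_of_iteratedDeriv_eq_zero {p : ℝ[X]} {x : ℝ} {m : ℕ}
    (h : ∀ k < m, iteratedDeriv k (fun t => p.eval t) x = 0) : (X - C x) ^ m ∣ p :=
  X_sub_C_pow_dvd_iff_taylor_coeff.2 fun k hk => by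
    rw [taylor_coeff_eq_iteratedDeriv_div, h k hk, zero_div]

theorem coeff_taylor_X_sub_C_pow_mul {R : Type*} [CommRing R] (x : R) (j i : ℕ) (q : R[X]) :
    (taylor x ((X - C x) ^ j * q)).coeff (i + j) = (taylor x q).coeff i := by
  simp [taylor_mul, taylor_X, taylor_C]

theorem card_roots_filter_le_derivative {I : Set ℝ} [DecidablePred (· ∈ I)] (hI : I.OrdConnected)
    (p : ℝ[X]) :
    Multiset.card (p.roots.filter (· ∈ I)) ≤
      Multiset.card ((derivative p).roots.filter (· ∈ I)) + 1 := by
  rcases eq_or_ne (derivative p) 0 with hp' | hp'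
  · rw [eq_C_of_derivative_eq_zero hp']
    simp
  have hp : p ≠ 0 := ne_of_apply_ne derivative (by rwa [derivative_zero])
  set F' := (derivative p).roots.filter (· ∈ I)
  set S := (p.roots.filter (· ∈ I)).toFinset
  set S' := F'.toFinset
  have hS : ∀ x, x ∈ S ↔ p.IsRoot x ∧ x ∈ I := by simp [S, mem_roots hp]
  have hS' : ∀ x, x ∈ S' ↔ (derivative p).IsRoot x ∧ x ∈ I := by simp [S', F', mem_roots hp']
  have hrolle : S.card ≤ (S' \ S).card + 1 := by
    refine Finset.card_le_sdiff_of_interleaved fun x hx y hy hxy _ => ?_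
    rw [hS] at hx hy
    obtain ⟨z, hz, hz'⟩ := exists_deriv_eq_zero hxy p.continuousOn (hx.1.trans hy.1.symm)
    rw [Polynomial.deriv] at hz'
    exact ⟨z, (hS' z).2 ⟨hz', hI.out hx.2 hy.2 (Set.Ioo_subset_Icc_self hz)⟩, hz⟩
  calc Multiset.card (p.roots.filter (· ∈ I))
      = ∑ x ∈ S, p.rootMultiplicity x := by
        rw [← Multiset.toFinset_sum_count_eq]
        refine Finset.sum_congr rfl fun x hx => ?_
        rw [Multiset.count_filter_of_pos ((hS x).1 hx).2, count_roots]
    _ ≤ ∑ x ∈ S, (F'.count x + 1) := Finset.sum_le_sum fun x hx => by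
        rw [Multiset.count_filter_of_pos ((hS x).1 hx).2, count_roots]
        have := rootMultiplicity_sub_one_le_derivative_rootMultiplicity p x
        omega
    _ ≤ ∑ x ∈ S, F'.count x + (S' \ S).card + 1 := by
        rw [Finset.sum_add_distrib, Finset.sum_const, smul_eq_mul, mul_one]
        omega
    _ ≤ ∑ x ∈ S, F'.count x + ∑ x ∈ S' \ S, F'.count x + 1 := by
        rw [Finset.card_eq_sum_ones]
        gcongr with x hx
        exact Multiset.count_pos.2 (Multiset.mem_toFinset.1 (Finset.mem_sdiff.1 hx).1)
    _ = Multiset.card F' + 1 := by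
        rw [← Finset.sum_union Finset.disjoint_sdiff, Finset.union_sdiff_self_eq_union,
          Multiset.sum_count_eq_card fun x hx =>
            Finset.mem_union_right _ (Multiset.mem_toFinset.2 hx)]

theorem card_roots_filter_add_rootMultiplicity_derivative_le {I : Set ℝ} [DecidablePred (· ∈ I)]
    (hI : I.OrdConnected) {b : ℝ} (hb : b ∉ I) (p : ℝ[X]) :
    Multiset.card (p.roots.filter (· ∈ I)) + (derivative p).rootMultiplicity b ≤ p.natDegree := by
  rcases eq_or_ne (derivative p) 0 with hp' | hp'
  · rw [hp', eq_C_of_derivative_eq_zero hp']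
    simp
  have hsplit : Multiset.card ((derivative p).roots.filter (· ∈ I)) +
      (derivative p).rootMultiplicity b ≤ Multiset.card (derivative p).roots := by
    calc _ = Multiset.card ((derivative p).roots.filter (· ∈ I)) +
          ((derivative p).roots.filter (· ∉ I)).count b := by
          rw [Multiset.count_filter_of_pos (p := (· ∉ I)) hb, count_roots]
      _ ≤ Multiset.card ((derivative p).roots.filter (· ∈ I)) +
          Multiset.card ((derivative p).roots.filter (· ∉ I)) := by
          gcongr
          exact Multiset.count_le_card _ _
      _ = _ := by rw [← Multiset.card_add, Multiset.filter_add_not]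
  have := card_roots_filter_le_derivative hI p
  have := card_roots' (derivative p)
  have := natDegree_derivative_lt (p := p) fun h => hp' (derivative_of_natDegree_zero h)
  omega

theorem natDegree_X_sub_C_pow_mul {R : Type*} [CommRing R] [IsDomain R] (x : R) (j : ℕ)
    {q : R[X]} (hq : q ≠ 0) : ((X - C x) ^ j * q).natDegree = j + q.natDegree := by
  rw [natDegree_mul (pow_ne_zero _ (X_sub_C_ne_zero x)) hq, natDegree_pow, natDegree_X_sub_C,
    mul_one]

theorem X_sub_C_pow_dvd_derivative_of_taylor_coeff {R : Type*} [CommRing R] {p : R[X]} {x : R}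
    {m : ℕ} (h : ∀ k, 0 < k → k ≤ m → (taylor x p).coeff k = 0) :
    (X - C x) ^ m ∣ derivative p := by
  have hdvd : (X - C x) ^ (m + 1) ∣ p - C (p.eval x) :=
    X_sub_C_pow_dvd_iff_taylor_coeff.2 fun k hk => by
      rw [map_sub, taylor_C, coeff_sub, coeff_C]
      rcases Nat.eq_zero_or_pos k with rfl | hk0
      · rw [taylor_coeff_zero, if_pos rfl, sub_self]
      · rw [h k hk0 (by omega), if_neg hk0.ne', sub_zero]
  simpa using pow_sub_one_dvd_derivative_of_pow_dvd hdvd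

theorem eval_eq_and_X_sub_C_pow_dvd_derivative_of_taylor_coeff {R : Type*} [CommRing R]
    {x c : R} {j s : ℕ} {q : R[X]} (hjs : j < s)
    (h : ∀ k < s, (taylor x ((X - C x) ^ j * q)).coeff k = if k = j then c else 0) :
    q.eval x = c ∧ (X - C x) ^ (s - 1 - j) ∣ derivative q := by
  have hq : ∀ i, i + j < s → (taylor x q).coeff i = if i = 0 then c else 0 := fun i hi => by
    rw [← coeff_taylor_X_sub_C_pow_mul, h _ hi]
    simp
  refine ⟨by rw [← taylor_coeff_zero, hq 0 (by omega), if_pos rfl], ?_⟩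
  exact X_sub_C_pow_dvd_derivative_of_taylor_coeff fun i hi0 hi => by
    rw [hq i (by omega), if_neg hi0.ne']

theorem nonneg_on_Icc_of_natDegree_mul_le {a b : ℝ} {u : ℕ} {A R : ℝ[X]}
    (hA : ∀ t ∈ Set.Icc a b, 0 ≤ A.eval t) (hb : 0 < (A * R).eval b)
    (hdvd : (X - C b) ^ u ∣ derivative (A * R))
    (hdeg : (A * R).natDegree ≤ Multiset.card (A.roots.filter (· ∈ Set.Ico a b)) + u) :
    ∀ t ∈ Set.Icc a b, 0 ≤ (A * R).eval t := by
  intro t ht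
  by_contra! hneg
  have hAR : A * R ≠ 0 := by
    rintro h
    simp [h] at hb
  rw [eval_mul] at hb hneg
  have hRt : R.eval t < 0 := by
    by_contra! h
    exact hneg.not_ge (mul_nonneg (hA t ht) h)
  have hRb : 0 < R.eval b := pos_of_mul_pos_right hb (hA b ⟨ht.1.trans ht.2, le_rfl⟩)
  obtain ⟨c, hc, hRc⟩ := intermediate_value_Ioo ht.2 R.continuousOn ⟨hRt, hRb⟩
  have hroots : Multiset.card (A.roots.filter (· ∈ Set.Ico a b)) + 1 ≤
      Multiset.card ((A * R).roots.filter (· ∈ Set.Ico a b)) := by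
    rw [roots_mul hAR, Multiset.filter_add, Multiset.card_add]
    gcongr
    have hcR : c ∈ R.roots := (mem_roots (right_ne_zero_of_mul hAR)).2 hRc
    exact Multiset.card_pos_iff_exists_mem.2
      ⟨c, Multiset.mem_filter.2 ⟨hcR, ht.1.trans hc.1.le, hc.2⟩⟩
  have hAR' : derivative (A * R) ≠ 0 := by
    intro h
    rw [eq_C_of_derivative_eq_zero h, roots_C] at hroots
    simp at hroots
  have hmult := (le_rootMultiplicity_iff hAR').2 hdvd
  have := card_roots_filter_add_rootMultiplicity_derivative_le
    (Set.ordConnected_Ico (a := a) (b := b)) Set.right_notMem_Ico (A * R)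
  omega

end Polynomial

def hermiteNodes (a : ℝ) (r : ℕ) (τ : ℕ → ℝ) (n : ℕ) : Multiset ℝ :=
  r • {a} + 2 • (Multiset.range n).map τ

section hermiteNodes

variable {a b : ℝ} {r n : ℕ} {τ : ℕ → ℝ}

theorem card_hermiteNodes : Multiset.card (hermiteNodes a r τ n) = r + 2 * n := by
  simp [hermiteNodes]

theorem mem_Ico_of_mem_hermiteNodes (hab : a < b) (hτ : ∀ k < n, τ k ∈ Set.Ioo a b) {x : ℝ}
    (hx : x ∈ hermiteNodes a r τ n) : x ∈ Set.Ico a b := by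
  simp only [hermiteNodes, Multiset.mem_add, Multiset.mem_nsmul, Multiset.mem_singleton,
    Multiset.mem_map, Multiset.mem_range] at hx
  rcases hx with ⟨-, rfl⟩ | ⟨-, k, hk, rfl⟩
  · exact ⟨le_rfl, hab⟩
  · exact Set.Ioo_subset_Ico_self (hτ k hk)

theorem eval_prod_hermiteNodes_nonneg {t : ℝ} (ht : a ≤ t) :
    0 ≤ (((hermiteNodes a r τ n).map fun x => X - C x).prod).eval t := by
  simp only [hermiteNodes, Multiset.map_add, Multiset.map_nsmul, Multiset.prod_add,
    Multiset.prod_nsmul, Multiset.map_singleton, Multiset.prod_singleton, eval_mul, eval_pow,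
    eval_sub, eval_X, eval_C]
  exact mul_nonneg (pow_nonneg (sub_nonneg.2 ht) r) (sq_nonneg _)

theorem nsmul_singleton_add_hermiteNodes_le_roots {p : ℝ[X]} {j : ℕ} (hp : p ≠ 0) (hab : a < b)
    (hτab : ∀ k < n, τ k ∈ Set.Ioo a b) (hτmono : ∀ i k, i < k → k < n → τ i < τ k)
    (hb : (X - C b) ^ j ∣ p) (ha : (X - C a) ^ r ∣ p) (hτ : ∀ k < n, (X - C (τ k)) ^ 2 ∣ p) :
    j • {b} + hermiteNodes a r τ n ≤ p.roots := by
  have hT : ((Multiset.range n).map τ).Nodup := by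
    refine (Multiset.nodup_range n).map_on fun i hi k hk hik => ?_
    rw [Multiset.mem_range] at hi hk
    rcases lt_trichotomy i k with h | rfl | h
    · exact absurd hik (hτmono i k h hk).ne
    · rfl
    · exact absurd hik (hτmono k i h hi).ne'
  have haT : a ∉ (Multiset.range n).map τ := by
    simp only [Multiset.mem_map, Multiset.mem_range, not_exists, not_and]
    exact fun k hk => (hτab k hk).1.ne'
  have hbH : b ∉ hermiteNodes a r τ n := fun h =>
    (mem_Ico_of_mem_hermiteNodes hab hτab h).2.false
  refine Multiset.le_iff_count.2 fun x => ?_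
  rw [count_roots]
  refine (le_rootMultiplicity_iff hp).2 ?_
  by_cases hxb : x = b
  · subst hxb
    simpa [Multiset.count_eq_zero.2 hbH] using hb
  by_cases hxa : x = a
  · subst hxa
    simpa [hermiteNodes, hxb, Multiset.count_eq_zero.2 haT] using ha
  simp only [hermiteNodes, Multiset.count_add, Multiset.count_nsmul, Multiset.count_singleton,
    hxb, hxa, if_false, mul_zero, zero_add]
  by_cases hxT : x ∈ (Multiset.range n).map τ
  · obtain ⟨k, hk, rfl⟩ := Multiset.mem_map.1 hxT
    rw [Multiset.count_eq_one_of_mem hT hxT]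
    exact hτ k (Multiset.mem_range.1 hk)
  · simp [Multiset.count_eq_zero.2 hxT]

theorem exists_eq_X_sub_C_pow_mul_hermiteNodes_prod_mul {p : ℝ[X]} {j : ℕ} (hp : p ≠ 0)
    (hab : a < b) (hτab : ∀ k < n, τ k ∈ Set.Ioo a b)
    (hτmono : ∀ i k, i < k → k < n → τ i < τ k) (hb : (X - C b) ^ j ∣ p)
    (ha : ∀ k < r, iteratedDeriv k (fun t => p.eval t) a = 0)
    (hτ0 : ∀ k < n, p.eval (τ k) = 0) (hτ1 : ∀ k < n, deriv (fun t => p.eval t) (τ k) = 0) :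
    ∃ R, p = (X - C b) ^ j * (((hermiteNodes a r τ n).map fun x => X - C x).prod * R) := by
  obtain ⟨R, hR⟩ := (Multiset.prod_X_sub_C_dvd_iff_le_roots hp _).2 <|
    nsmul_singleton_add_hermiteNodes_le_roots hp hab hτab hτmono hb
      (X_sub_C_pow_dvd_of_iteratedDeriv_eq_zero ha)
      fun k hk => X_sub_C_pow_dvd_of_iteratedDeriv_eq_zero fun i hi => by
        interval_cases i <;> simp [hτ0 k hk, hτ1 k hk]
  exact ⟨R, by simp [hR, Multiset.map_nsmul, Multiset.prod_nsmul, mul_assoc]⟩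

end hermiteNodes

/-- the Lagrange–Hermite polynomial `P_{n,r,s,b,j}` associated with the
`j`-th derivative at `b` (vanishing to order `r` at `a`, doubly at each `τ_k`, and with
`P^{(k)}(b)/k! = δ_{kj}/j!` for `k = 0,…,s-1`) has constant sign `(-1)^j` on `[a,b]`. -/
theorem right_lagrange_sign
    (n r s : ℕ) (hs : 1 ≤ s) (a b : ℝ) (hab : a < b)
    (τ : ℕ → ℝ)
    (hτab : ∀ k < n, τ k ∈ Set.Ioo a b)
    (hτmono : ∀ i k, i < k → k < n → τ i < τ k)
    (j : ℕ) (hj : j ≤ s - 1)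
    (p : Polynomial ℝ) (hdeg : p.natDegree + 1 ≤ 2 * n + r + s)
    (ha : ∀ k < r, iteratedDeriv k (fun t => p.eval t) a = 0)
    (hτ0 : ∀ k < n, p.eval (τ k) = 0)
    (hτ1 : ∀ k < n, deriv (fun t => p.eval t) (τ k) = 0)
    (hb : ∀ k < s, iteratedDeriv k (fun t => p.eval t) b / (k.factorial : ℝ)
        = (if k = j then 1 else 0) / (j.factorial : ℝ)) :
    ∀ t ∈ Set.Icc a b, 0 ≤ (-1 : ℝ) ^ j * p.eval t := by
  have hpb : ∀ k < s, (taylor b p).coeff k = if k = j then (j ! : ℝ)⁻¹ else 0 := fun k hk => by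
    rw [taylor_coeff_eq_iteratedDeriv_div, hb k hk]
    split_ifs <;> simp
  have hp : p ≠ 0 := by
    rintro rfl
    simpa [eq_comm, Nat.factorial_ne_zero] using hpb j (by omega)
  obtain ⟨R, hpAR⟩ := exists_eq_X_sub_C_pow_mul_hermiteNodes_prod_mul (j := j) hp hab hτab hτmono
    (X_sub_C_pow_dvd_iff_taylor_coeff.2 fun k hk => by rw [hpb k (by omega), if_neg hk.ne])
    ha hτ0 hτ1
  set A := ((hermiteNodes a r τ n).map fun x => X - C x).prod
  obtain ⟨hARb, hdvd⟩ := eval_eq_and_X_sub_C_pow_dvd_derivative_of_taylor_coeff (by omega)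
    fun k hk => hpAR ▸ hpb k hk
  have hAR : 0 < (A * R).eval b := hARb ▸ by positivity
  have hdegAR :
      (A * R).natDegree ≤ Multiset.card (A.roots.filter (· ∈ Set.Ico a b)) + (s - 1 - j) := by
    rw [roots_multiset_prod_X_sub_C, Multiset.filter_eq_self.2 fun x hx =>
      mem_Ico_of_mem_hermiteNodes hab hτab hx, card_hermiteNodes]
    have := natDegree_X_sub_C_pow_mul b j (fun h => by simp [h] at hAR : A * R ≠ 0)
    rw [← hpAR] at this
    omega
  intro t ht
  rw [hpAR, eval_mul, eval_pow, eval_sub, eval_X, eval_C, ← mul_assoc, ← mul_pow]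
  exact mul_nonneg (pow_nonneg (by linarith [ht.2]) j) <| nonneg_on_Icc_of_natDegree_mul_le
    (fun t ht => eval_prod_hermiteNodes_nonneg ht.1) hAR hdvd hdegAR t ht
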